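/- arXiv:0808.3418 — 7 statements merged into one kernel-verified Lean document; each statement's English description precedes it below -/
import Mathlib

section
/- For positive reals h_j,...,h_{M-1} and μ ≥ 0, the function μ ↦ (Σ_{m=j}^{M-1} h_m²/(1+μh_m)²) / (Σ_{m=j}^{M-1} h_m/(1+μh_m)) is non-increasing on [0,∞). -/
/-!
Write `damp μ x = x / (1 + μ x)`. These maps form a semigroup, `damp t ∘ damp μ = damp (μ + t)`,
so comparing the ratio at `μ ≤ ν` reduces, after replacing `h` by `damp μ ∘ h`, to comparing the
ratio at `t = ν - μ` with the ratio at `0`. Cross-multiplied, that comparison is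
`(∑ u_m²)(∑ a_m) ≤ (∑ a_m²)(∑ u_m)` with `u = damp t a`, and it holds term by term once the double
sum is symmetrized in the pair of indices.
-/

open Finset

theorem Finset.sum_mul_sum_le_sum_mul_sum_of_symm {ι R : Type*} [CommRing R] [LinearOrder R]
    [IsStrictOrderedRing R] (s : Finset ι) (f g F G : ι → R)
    (hpair : ∀ i ∈ s, ∀ j ∈ s, f i * g j + f j * g i ≤ F i * G j + F j * G i) :
    (∑ i ∈ s, f i) * (∑ i ∈ s, g i) ≤ (∑ i ∈ s, F i) * (∑ i ∈ s, G i) := by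
  have symm : ∀ f g : ι → R, 2 * ((∑ i ∈ s, f i) * (∑ i ∈ s, g i)) =
      ∑ i ∈ s, ∑ j ∈ s, (f i * g j + f j * g i) := by
    intro f g
    simp only [sum_add_distrib, sum_mul_sum, two_mul]
    rw [sum_comm (f := fun i j => f j * g i)]
  have := sum_le_sum fun i hi => sum_le_sum fun j hj => hpair i hi j hj
  rw [← symm, ← symm] at this
  exact le_of_mul_le_mul_left this two_pos

section Damp

variable {K ι : Type*} [Field K]

def damp (μ x : K) : K := x / (1 + μ * x)

@[simp]
theorem damp_zero (x : K) : damp 0 x = x := by simp [damp]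

theorem damp_damp {μ x : K} (t : K) (hμx : 1 + μ * x ≠ 0) :
    damp t (damp μ x) = damp (μ + t) x := by
  unfold damp
  rw [mul_div_assoc', one_add_div hμx, div_div_div_cancel_right₀ hμx]
  congr 1
  ring

def dampRatio (s : Finset ι) (h : ι → K) (μ : K) : K :=
  (∑ m ∈ s, damp μ (h m) ^ 2) / ∑ m ∈ s, damp μ (h m)

theorem dampRatio_add {s : Finset ι} {h : ι → K} {μ : K}
    (hμ : ∀ m ∈ s, 1 + μ * h m ≠ 0) (t : K) :
    dampRatio s h (μ + t) = dampRatio s (fun m => damp μ (h m)) t := by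
  unfold dampRatio
  congr 1 <;> refine sum_congr rfl fun m hm => ?_ <;> rw [damp_damp t (hμ m hm)]

variable [LinearOrder K] [IsStrictOrderedRing K]

theorem damp_pos {μ x : K} (hμ : 0 ≤ μ) (hx : 0 < x) : 0 < damp μ x := by
  unfold damp; positivity

theorem damp_sq_mul_add_damp_sq_mul_le {a b t : K} (ha : 0 < a) (hb : 0 < b) (ht : 0 ≤ t) :
    damp t a ^ 2 * b + damp t b ^ 2 * a ≤ a ^ 2 * damp t b + b ^ 2 * damp t a := by
  have hA : 0 < 1 + t * a := by positivity
  have hB : 0 < 1 + t * b := by positivity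
  have gap : a ^ 2 * damp t b + b ^ 2 * damp t a - (damp t a ^ 2 * b + damp t b ^ 2 * a) =
      a * b * (2 * t * (a ^ 2 - a * b + b ^ 2) + t ^ 2 * (a + b) * (a ^ 2 + b ^ 2)
        + t ^ 3 * a * b * (a ^ 2 + b ^ 2)) / ((1 + t * a) ^ 2 * (1 + t * b) ^ 2) := by
    unfold damp
    field_simp
    ring
  have hquad : 0 ≤ a ^ 2 - a * b + b ^ 2 := by nlinarith [sq_nonneg (a - b)]
  have : 0 ≤ a ^ 2 * damp t b + b ^ 2 * damp t a - (damp t a ^ 2 * b + damp t b ^ 2 * a) := by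
    rw [gap]; positivity
  linarith

theorem dampRatio_le_dampRatio_zero {s : Finset ι} {a : ι → K}
    (ha : ∀ m ∈ s, 0 < a m) {t : K} (ht : 0 ≤ t) : dampRatio s a t ≤ dampRatio s a 0 := by
  rcases s.eq_empty_or_nonempty with rfl | hs
  · simp [dampRatio]
  have hsum : ∀ {μ : K}, 0 ≤ μ → 0 < ∑ m ∈ s, damp μ (a m) := fun hμ =>
    sum_pos (fun m hm => damp_pos hμ (ha m hm)) hs
  unfold dampRatio
  rw [div_le_div_iff₀ (hsum ht) (hsum le_rfl)]
  exact sum_mul_sum_le_sum_mul_sum_of_symm s _ _ _ _ fun i hi j hj => by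
    simpa using damp_sq_mul_add_damp_sq_mul_le (ha i hi) (ha j hj) ht

theorem dampRatio_antitoneOn {s : Finset ι} {h : ι → K}
    (hpos : ∀ m ∈ s, 0 < h m) : AntitoneOn (dampRatio s h) (Set.Ici 0) := by
  intro μ hμ ν _ hμν
  have hμh : ∀ m ∈ s, 1 + μ * h m ≠ 0 := fun m hm => by
    have := hpos m hm; have : (0 : K) ≤ μ := hμ; positivity
  obtain ⟨t, ht, rfl⟩ : ∃ t, 0 ≤ t ∧ ν = μ + t := ⟨ν - μ, sub_nonneg.2 hμν, by ring⟩
  calc dampRatio s h (μ + t)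
      = dampRatio s (fun m => damp μ (h m)) t := dampRatio_add hμh t
    _ ≤ dampRatio s (fun m => damp μ (h m)) 0 :=
        dampRatio_le_dampRatio_zero (fun m hm => damp_pos hμ (hpos m hm)) ht
    _ = dampRatio s h μ := by rw [← dampRatio_add hμh, add_zero]

end Damp

theorem stmt_1_general (j M : ℕ) (h : ℕ → ℝ)
    (hpos : ∀ m ∈ Finset.Ico j M, 0 < h m) :
    AntitoneOn
      (fun μ : ℝ =>
        (∑ m ∈ Finset.Ico j M, (h m) ^ 2 / (1 + μ * h m) ^ 2) /
          (∑ m ∈ Finset.Ico j M, h m / (1 + μ * h m)))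
      (Set.Ici (0 : ℝ)) := by
  intro μ hμ ν hν hμν
  simpa only [dampRatio, damp, div_pow] using dampRatio_antitoneOn hpos hμ hν hμν

theorem stmt_1 (j M : ℕ) (hjM : j < M) (h : ℕ → ℝ)
    (hpos : ∀ m ∈ Finset.Ico j M, 0 < h m) :
    AntitoneOn
      (fun μ : ℝ =>
        (∑ m ∈ Finset.Ico j M, (h m) ^ 2 / (1 + μ * h m) ^ 2) /
          (∑ m ∈ Finset.Ico j M, h m / (1 + μ * h m)))
      (Set.Ici (0 : ℝ)) :=
  stmt_1_general j M h hpos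
end

section
/- For c > 1, h_0, h_1 > 0 with h_0 ≤ h_1, the function P_M(r) = (2√(cr) − r − 1)/(h_0 r + h_1) defined on [1, c] attains its unique maximum at r_opt = ((√((h_1−h_0)² + 4h_0h_1c) − (h_1−h_0))/(2h_0√c))², and 1 ≤ r_opt ≤ c; moreover P_M is strictly increasing on [1, r_opt) and strictly decreasing on (r_opt, c]. -/
/-!
Write `s = √c` and `t = √r`. The derivative of `P_M` at `r > 0` is
`-Q(t) / (t (h₀ r + h₁)²)` with `Q(t) = h₀ s t² + (h₁ - h₀) t - h₁ s`, and `Q` factors as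
`(t - t⋆) · (positive factor on t ≥ 0)`, where `t⋆` is its positive root. Hence `P_M` increases
on `[0, t⋆²]` and decreases on `[t⋆², ∞)`, and `r_opt = t⋆²`. Finally
`Q(1) = (h₁ - h₀)(1 - s) ≤ 0` and `Q(s) = h₀ s (c - 1) > 0` place `t⋆` in `[1, √c)`.
-/

open Real Set

noncomputable def posRoot (a b k : ℝ) : ℝ := (√(b ^ 2 + 4 * a * k) - b) / (2 * a)

section posRoot

variable {a b k : ℝ}

lemma abs_lt_sqrt_discrim (ha : 0 < a) (hk : 0 < k) : |b| < √(b ^ 2 + 4 * a * k) := by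
  rw [← sqrt_sq_eq_abs]
  exact sqrt_lt_sqrt (sq_nonneg b) (by nlinarith [mul_pos ha hk])

lemma posRoot_pos (ha : 0 < a) (hk : 0 < k) : 0 < posRoot a b k :=
  div_pos (by linarith [le_abs_self b, abs_lt_sqrt_discrim (b := b) ha hk]) (by linarith)

lemma quadratic_eq_mul_sub_posRoot (ha : 0 < a) (hk : 0 ≤ k) (t : ℝ) :
    a * t ^ 2 + b * t - k = (t - posRoot a b k) * (a * (t + posRoot a b k) + b) := by
  unfold posRoot
  have hsq : √(b ^ 2 + 4 * a * k) ^ 2 = b ^ 2 + 4 * a * k := sq_sqrt (by positivity)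
  generalize √(b ^ 2 + 4 * a * k) = D at hsq ⊢
  field_simp
  linear_combination hsq

lemma quadratic_cofactor_pos (ha : 0 < a) (hk : 0 < k) {t : ℝ} (ht : 0 ≤ t) :
    0 < a * (t + posRoot a b k) + b := by
  have : a * posRoot a b k = (√(b ^ 2 + 4 * a * k) - b) / 2 := by
    unfold posRoot; field_simp
  nlinarith [neg_abs_le b, abs_lt_sqrt_discrim (b := b) ha hk, mul_nonneg ha.le ht]

lemma posRoot_le_iff (ha : 0 < a) (hk : 0 < k) {t : ℝ} (ht : 0 ≤ t) :
    posRoot a b k ≤ t ↔ 0 ≤ a * t ^ 2 + b * t - k := by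
  rw [quadratic_eq_mul_sub_posRoot ha hk.le, mul_nonneg_iff_of_pos_right
    (quadratic_cofactor_pos ha hk ht), sub_nonneg]

lemma posRoot_lt_iff (ha : 0 < a) (hk : 0 < k) {t : ℝ} (ht : 0 ≤ t) :
    posRoot a b k < t ↔ 0 < a * t ^ 2 + b * t - k := by
  rw [quadratic_eq_mul_sub_posRoot ha hk.le, mul_pos_iff_of_pos_right
    (quadratic_cofactor_pos ha hk ht), sub_pos]

lemma le_posRoot_iff (ha : 0 < a) (hk : 0 < k) {t : ℝ} (ht : 0 ≤ t) :
    t ≤ posRoot a b k ↔ a * t ^ 2 + b * t - k ≤ 0 := by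
  simpa only [not_lt] using (posRoot_lt_iff (b := b) ha hk ht).not

lemma lt_posRoot_iff (ha : 0 < a) (hk : 0 < k) {t : ℝ} (ht : 0 ≤ t) :
    t < posRoot a b k ↔ a * t ^ 2 + b * t - k < 0 := by
  simpa only [not_le] using (posRoot_le_iff (b := b) ha hk ht).not

end posRoot

noncomputable def powerRatio (c h0 h1 r : ℝ) : ℝ := (2 * √(c * r) - r - 1) / (h0 * r + h1)

section powerRatio

variable {c h0 h1 : ℝ}

lemma hasDerivAt_powerRatio (hc : 0 < c) {r : ℝ} (hr : 0 < r) (hden : h0 * r + h1 ≠ 0) :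
    HasDerivAt (powerRatio c h0 h1)
      (-(h0 * √c * √r ^ 2 + (h1 - h0) * √r - h1 * √c) / (√r * (h0 * r + h1) ^ 2)) r := by
  have hnum : HasDerivAt (fun r => 2 * √(c * r) - r - 1) (2 * (c / (2 * √(c * r))) - 1) r := by
    simpa using ((((hasDerivAt_id r).const_mul c).sqrt (by positivity)).const_mul 2).sub
      (hasDerivAt_id r) |>.sub_const 1
  have hden' : HasDerivAt (fun r => h0 * r + h1) h0 r := by
    simpa using ((hasDerivAt_id r).const_mul h0).add_const h1
  refine (hnum.div hden' hden).congr_deriv ?_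
  obtain ⟨t, ht, rfl⟩ : ∃ t, 0 < t ∧ r = t ^ 2 := ⟨√r, sqrt_pos.2 hr, (sq_sqrt hr.le).symm⟩
  have hsc : √c ^ 2 = c := sq_sqrt hc.le
  have hs : 0 < √c := sqrt_pos.2 hc
  rw [sqrt_mul hc.le, sqrt_sq ht.le]
  field_simp
  rw [← neg_div, div_left_inj' (pow_ne_zero 2 (by rwa [mul_comm] at hden))]
  linear_combination (-(t ^ 2 * h0) - h1) * hsc

lemma continuousOn_powerRatio (hh0 : 0 ≤ h0) (hh1 : 0 < h1) :
    ContinuousOn (powerRatio c h0 h1) (Ici 0) :=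
  ContinuousOn.div (by fun_prop) (by fun_prop) fun r (hr : 0 ≤ r) => by positivity

lemma strictMonoOn_powerRatio (hc : 0 < c) (hh0 : 0 < h0) (hh1 : 0 < h1) :
    StrictMonoOn (powerRatio c h0 h1) (Icc 0 (posRoot (h0 * √c) (h1 - h0) (h1 * √c) ^ 2)) := by
  have hroot :=
    posRoot_pos (b := h1 - h0) (mul_pos hh0 (sqrt_pos.2 hc)) (mul_pos hh1 (sqrt_pos.2 hc))
  refine strictMonoOn_of_deriv_pos (convex_Icc _ _)
    ((continuousOn_powerRatio hh0.le hh1).mono Icc_subset_Ici_self) ?_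
  rw [interior_Icc]
  rintro r ⟨hr0, hr⟩
  rw [(hasDerivAt_powerRatio hc hr0 (by positivity)).deriv]
  have hQ := (lt_posRoot_iff (by positivity) (by positivity) (sqrt_nonneg r)).1
    ((sqrt_lt' hroot).2 hr)
  exact div_pos (neg_pos.2 hQ) (by positivity)

lemma strictAntiOn_powerRatio (hc : 0 < c) (hh0 : 0 < h0) (hh1 : 0 < h1) :
    StrictAntiOn (powerRatio c h0 h1) (Ici (posRoot (h0 * √c) (h1 - h0) (h1 * √c) ^ 2)) := by
  have hroot :=
    posRoot_pos (b := h1 - h0) (mul_pos hh0 (sqrt_pos.2 hc)) (mul_pos hh1 (sqrt_pos.2 hc))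
  refine strictAntiOn_of_deriv_neg (convex_Ici _)
    ((continuousOn_powerRatio hh0.le hh1).mono (Ici_subset_Ici.2 (by positivity))) ?_
  rw [interior_Ici]
  rintro r (hr : _ < r)
  have hr0 : 0 < r := (sq_nonneg _).trans_lt hr
  rw [(hasDerivAt_powerRatio hc hr0 (by positivity)).deriv]
  have hQ := (posRoot_lt_iff (by positivity) (by positivity) (sqrt_nonneg r)).1
    ((lt_sqrt hroot.le).2 hr)
  exact div_neg_of_neg_of_pos (neg_neg_of_pos hQ) (by positivity)

end powerRatio

lemma StrictMonoOn.apply_lt_apply_of_strictAntiOn {α β : Type*} [LinearOrder α] [Preorder β]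
    {f : α → β} {a b m x : α} (hmono : StrictMonoOn f (Icc a m)) (hanti : StrictAntiOn f (Icc m b))
    (hx : x ∈ Icc a b) (hxm : x ≠ m) : f x < f m := by
  rcases hxm.lt_or_gt with hlt | hgt
  · exact hmono ⟨hx.1, hlt.le⟩ ⟨hx.1.trans hlt.le, le_rfl⟩ hlt
  · exact hanti ⟨le_rfl, hgt.le.trans hx.2⟩ ⟨hgt.le, hx.2⟩ hgt

section optimalRoot

variable {c h0 h1 : ℝ}

lemma one_le_posRoot (hc : 1 ≤ c) (hh0 : 0 < h0) (hle : h0 ≤ h1) :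
    1 ≤ posRoot (h0 * √c) (h1 - h0) (h1 * √c) := by
  have hs : 1 ≤ √c := one_le_sqrt.2 hc
  have hh1 : 0 < h1 := hh0.trans_le hle
  refine (le_posRoot_iff (by positivity) (by positivity) zero_le_one).2 ?_
  nlinarith [mul_nonneg (sub_nonneg.2 hle) (sub_nonneg.2 hs)]

lemma posRoot_lt_sqrt (hc : 1 < c) (hh0 : 0 < h0) (hh1 : 0 < h1) :
    posRoot (h0 * √c) (h1 - h0) (h1 * √c) < √c := by
  have hc0 : 0 < c := zero_lt_one.trans hc
  refine (posRoot_lt_iff (by positivity) (by positivity) (sqrt_nonneg c)).2 ?_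
  rw [show h0 * √c * √c ^ 2 + (h1 - h0) * √c - h1 * √c = h0 * √c * (c - 1) by
    rw [sq_sqrt hc0.le]; ring]
  exact mul_pos (by positivity) (sub_pos.2 hc)

end optimalRoot

theorem stmt_4 (c h0 h1 : ℝ) (hc : 1 < c) (hh0 : 0 < h0) (hh1 : 0 < h1) (hle : h0 ≤ h1)
    (PM : ℝ → ℝ) (hPM : ∀ r, PM r = (2 * Real.sqrt (c * r) - r - 1) / (h0 * r + h1))
    (ropt : ℝ)
    (hropt : ropt =
      ((Real.sqrt ((h1 - h0) ^ 2 + 4 * h0 * h1 * c) - (h1 - h0)) /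
          (2 * h0 * Real.sqrt c)) ^ 2) :
    1 ≤ ropt ∧ ropt ≤ c ∧
      (∀ r ∈ Set.Icc (1 : ℝ) c, PM r ≤ PM ropt) ∧
      (∀ r ∈ Set.Icc (1 : ℝ) c, PM r = PM ropt → r = ropt) ∧
      StrictMonoOn PM (Set.Ico 1 ropt) ∧
      StrictAntiOn PM (Set.Ioc ropt c) := by
  have hc0 : 0 < c := zero_lt_one.trans hc
  obtain rfl : PM = powerRatio c h0 h1 := funext hPM
  obtain rfl : ropt = posRoot (h0 * √c) (h1 - h0) (h1 * √c) ^ 2 := by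
    rw [hropt, posRoot, mul_assoc 2, show 4 * (h0 * √c) * (h1 * √c) = 4 * h0 * h1 * c by
      linear_combination 4 * h0 * h1 * mul_self_sqrt hc0.le]
  set t := posRoot (h0 * √c) (h1 - h0) (h1 * √c)
  have hmono := strictMonoOn_powerRatio hc0 hh0 hh1
  have hanti := strictAntiOn_powerRatio hc0 hh0 hh1
  have ht2c : t ^ 2 < c := by
    simpa only [sq_sqrt hc0.le] using pow_lt_pow_left₀ (posRoot_lt_sqrt hc hh0 hh1)
      (zero_le_one.trans (one_le_posRoot hc.le hh0 hle)) two_ne_zero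
  have hpeak : ∀ r ∈ Icc 1 c, r ≠ t ^ 2 → powerRatio c h0 h1 r < powerRatio c h0 h1 (t ^ 2) :=
    fun r hr hne => (hmono.mono (Icc_subset_Icc_left zero_le_one)).apply_lt_apply_of_strictAntiOn
      (hanti.mono Icc_subset_Ici_self) hr hne
  refine ⟨one_le_pow₀ (one_le_posRoot hc.le hh0 hle), ht2c.le, fun r hr => ?_,
    fun r hr heq => not_ne_iff.1 fun hne => (hpeak r hr hne).ne heq,
    hmono.mono fun r hr => ⟨zero_le_one.trans hr.1, hr.2.le⟩, hanti.mono fun r hr => hr.1.le⟩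
  rcases eq_or_ne r (t ^ 2) with rfl | hne
  · exact le_rfl
  · exact (hpeak r hr hne).le
end

section
/- Define P_out(P, J) piecewise for fixed h > 0, σ² > 0, c > 1: P_out = 1 − (hP/(c−1))/(J(1+√(1+2σ²/J))+σ²) if hP/(c−1) ≤ (J/2)(1+√(1+2σ²/J))+σ², and P_out = (J/2)/(hP/(c−1)−σ²) otherwise. Then P_out is continuous in (P,J), strictly decreasing and convex in P for fixed J > 0, and strictly increasing and concave in J for fixed P with hP/(c−1) > σ². -/
/-!
Write `x = hP/(c-1)` and `D(J) = J(1 + √(1 + 2σ²/J)) + σ² = J + σ² + √(J(J + 2σ²))`, so that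
`(D - σ²)² = 2JD`. By this identity, for fixed `J` the first branch `1 - x/D` is the tangent line
of the convex decreasing hyperbola `J/(2(x - σ²))` at the switching point `x = (D + σ²)/2`; and
for fixed `x` the second branch `J/(2(x - σ²))` is the tangent line of `1 - x/D(J)` at the
critical jamming power, where `1 - x/D(J)` has derivative `x/(√(J(J + 2σ²)) D(J))`, positive and
decreasing. A function that follows a differentiable `v` to the right of `a` and its tangent line
at `a` to the left has derivative `v'(max x a)`, so monotonicity and convexity in each variable
reduce to the sign and monotonicity of `v'`. Joint continuity holds because the two branches
agree on the switching curve.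
-/

open Set

structure IsTangentExtension (F v v' : ℝ → ℝ) (I : Set ℝ) (a : ℝ) : Prop where
  mem : a ∈ I
  eq_tangent : ∀ x ∈ I, x ≤ a → F x = v a + v' a * (x - a)
  eq_right : ∀ x ∈ I, a ≤ x → F x = v x
  hasDerivAt_right : ∀ x ∈ I, a ≤ x → HasDerivAt v (v' x) x

namespace IsTangentExtension

variable {F v v' : ℝ → ℝ} {I : Set ℝ} {a : ℝ}

theorem hasDerivWithinAt_Iic (hF : IsTangentExtension F v v' I a) (hI : IsOpen I) {x : ℝ}
    (hx : x ∈ I) (hxa : x ≤ a) : HasDerivWithinAt F (v' a) (Iic a) x := by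
  have hline : HasDerivAt (fun y => v a + v' a * (y - a)) (v' a) x := by
    simpa using ((hasDerivAt_id x).sub_const a).const_mul (v' a) |>.const_add (v a)
  refine hline.hasDerivWithinAt.congr_of_eventuallyEq ?_ (hF.eq_tangent x hx hxa)
  filter_upwards [inter_mem_nhdsWithin (Iic a) (hI.mem_nhds hx)] with y hy
  exact hF.eq_tangent y hy.2 hy.1

theorem hasDerivWithinAt_Ici (hF : IsTangentExtension F v v' I a) (hI : IsOpen I) {x : ℝ}
    (hx : x ∈ I) (hxa : a ≤ x) : HasDerivWithinAt F (v' x) (Ici a) x := by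
  refine (hF.hasDerivAt_right x hx hxa).hasDerivWithinAt.congr_of_eventuallyEq ?_
    (hF.eq_right x hx hxa)
  filter_upwards [inter_mem_nhdsWithin (Ici a) (hI.mem_nhds hx)] with y hy
  exact hF.eq_right y hy.2 hy.1

theorem hasDerivAt (hF : IsTangentExtension F v v' I a) (hI : IsOpen I) {x : ℝ} (hx : x ∈ I) :
    HasDerivAt F (v' (max x a)) x := by
  rcases lt_trichotomy x a with hxa | rfl | hax
  · rw [max_eq_right hxa.le]
    exact (hF.hasDerivWithinAt_Iic hI hx hxa.le).hasDerivAt (Iic_mem_nhds hxa)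
  · rw [max_self, ← hasDerivWithinAt_univ, ← Iic_union_Ici]
    exact (hF.hasDerivWithinAt_Iic hI hx le_rfl).union (hF.hasDerivWithinAt_Ici hI hx le_rfl)
  · rw [max_eq_left hax.le]
    exact (hF.hasDerivWithinAt_Ici hI hx hax.le).hasDerivAt (Ici_mem_nhds hax)

theorem max_mem (hF : IsTangentExtension F v v' I a) {x : ℝ} (hx : x ∈ I) :
    max x a ∈ I ∩ Ici a :=
  ⟨max_rec' I hx hF.mem, le_max_right x a⟩

theorem convexOn (hF : IsTangentExtension F v v' I a) (hI : IsOpen I) (hIc : Convex ℝ I)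
    (hv' : MonotoneOn v' (I ∩ Ici a)) : ConvexOn ℝ I F := by
  have hderiv : ∀ x ∈ I, deriv F x = v' (max x a) := fun x hx => (hF.hasDerivAt hI hx).deriv
  refine MonotoneOn.convexOn_of_deriv hIc
    (fun x hx => (hF.hasDerivAt hI hx).continuousAt.continuousWithinAt) ?_ ?_
  · rw [hI.interior_eq]
    exact fun x hx => (hF.hasDerivAt hI hx).differentiableAt.differentiableWithinAt
  · rw [hI.interior_eq]
    intro x hx y hy hxy
    rw [hderiv x hx, hderiv y hy]
    exact hv' (hF.max_mem hx) (hF.max_mem hy) (max_le_max_right a hxy)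

theorem strictAntiOn (hF : IsTangentExtension F v v' I a) (hI : IsOpen I) (hIc : Convex ℝ I)
    (hv' : ∀ x ∈ I, a ≤ x → v' x < 0) : StrictAntiOn F I := by
  refine strictAntiOn_of_deriv_neg hIc
    (fun x hx => (hF.hasDerivAt hI hx).continuousAt.continuousWithinAt) ?_
  rw [hI.interior_eq]
  intro x hx
  rw [(hF.hasDerivAt hI hx).deriv]
  exact hv' _ (hF.max_mem hx).1 (hF.max_mem hx).2

theorem neg (hF : IsTangentExtension F v v' I a) : IsTangentExtension (-F) (-v) (-v') I a where
  mem := hF.mem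
  eq_tangent x hx hxa := by
    simp only [Pi.neg_apply, hF.eq_tangent x hx hxa]
    ring
  eq_right x hx hxa := by simp [hF.eq_right x hx hxa]
  hasDerivAt_right x hx hxa := (hF.hasDerivAt_right x hx hxa).neg

theorem strictMonoOn (hF : IsTangentExtension F v v' I a) (hI : IsOpen I) (hIc : Convex ℝ I)
    (hv' : ∀ x ∈ I, a ≤ x → 0 < v' x) : StrictMonoOn F I := by
  simpa using (hF.neg.strictAntiOn hI hIc fun x hx hxa => neg_neg_of_pos (hv' x hx hxa)).neg

theorem concaveOn (hF : IsTangentExtension F v v' I a) (hI : IsOpen I) (hIc : Convex ℝ I)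
    (hv' : AntitoneOn v' (I ∩ Ici a)) : ConcaveOn ℝ I F :=
  neg_convexOn_iff.1 (hF.neg.convexOn hI hIc hv'.neg)

end IsTangentExtension

/-- The paper's `J (1 + √(1 + 2s/J)) + s`, rewritten so that it is visibly increasing on `J ≥ 0`. -/
noncomputable def outageDenom (s J : ℝ) : ℝ := J + s + √(J * (J + 2 * s))

/-- The outage probability in the paper's notation, with `s = σ²` and `x = hP/(c-1)`. -/
noncomputable def outage (s x J : ℝ) : ℝ :=
  if x ≤ (outageDenom s J + s) / 2 then 1 - x / outageDenom s J else J / 2 / (x - s)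

section outageDenom

variable {s J : ℝ}

theorem mul_one_add_sqrt_add_eq_outageDenom (hJ : 0 < J) :
    J * (1 + √(1 + 2 * s / J)) + s = outageDenom s J := by
  have : J * √(1 + 2 * s / J) = √(J * (J + 2 * s)) := by
    rw [show J * (J + 2 * s) = J ^ 2 * (1 + 2 * s / J) by field_simp,
      Real.sqrt_mul (sq_nonneg J), Real.sqrt_sq hJ.le]
  rw [outageDenom, ← this]
  ring

theorem half_mul_one_add_sqrt_add_eq (hJ : 0 < J) :
    J / 2 * (1 + √(1 + 2 * s / J)) + s = (outageDenom s J + s) / 2 := by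
  rw [← mul_one_add_sqrt_add_eq_outageDenom hJ]
  ring

theorem sq_sqrt_mul_add (hs : 0 ≤ s) (hJ : 0 ≤ J) : √(J * (J + 2 * s)) ^ 2 = J * (J + 2 * s) :=
  Real.sq_sqrt (mul_nonneg hJ (add_nonneg hJ (mul_nonneg zero_le_two hs)))

theorem sqrt_mul_add_pos (hs : 0 ≤ s) (hJ : 0 < J) : 0 < √(J * (J + 2 * s)) :=
  Real.sqrt_pos.2 (mul_pos hJ (by linarith))

theorem outageDenom_sub_sq (hs : 0 ≤ s) (hJ : 0 ≤ J) :
    (outageDenom s J - s) ^ 2 = 2 * J * outageDenom s J := by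
  rw [outageDenom]
  linear_combination sq_sqrt_mul_add hs hJ

theorem lt_outageDenom (hJ : 0 < J) : s < outageDenom s J := by
  rw [outageDenom]
  linarith [Real.sqrt_nonneg (J * (J + 2 * s))]

theorem outageDenom_pos (hs : 0 ≤ s) (hJ : 0 < J) : 0 < outageDenom s J :=
  hs.trans_lt (lt_outageDenom hJ)

theorem continuous_outageDenom (s : ℝ) : Continuous (outageDenom s) := by
  unfold outageDenom
  fun_prop

theorem monotoneOn_sqrt_mul_add (hs : 0 ≤ s) :
    MonotoneOn (fun J => √(J * (J + 2 * s))) (Ici 0) := by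
  intro J₁ (hJ₁ : 0 ≤ J₁) J₂ _ h
  exact Real.sqrt_le_sqrt (by nlinarith)

theorem strictMonoOn_outageDenom (hs : 0 ≤ s) : StrictMonoOn (outageDenom s) (Ici 0) := by
  intro J₁ hJ₁ J₂ hJ₂ h
  have := monotoneOn_sqrt_mul_add hs hJ₁ hJ₂ h.le
  simp only [outageDenom] at this ⊢
  linarith

theorem hasDerivAt_outageDenom (hs : 0 ≤ s) (hJ : 0 < J) :
    HasDerivAt (outageDenom s) (outageDenom s J / √(J * (J + 2 * s))) J := by
  have hr := sqrt_mul_add_pos hs hJ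
  have hroot : HasDerivAt (fun J => √(J * (J + 2 * s))) ((J + s) / √(J * (J + 2 * s))) J := by
    have hprod : HasDerivAt (fun J => J * (J + 2 * s)) (1 * (J + 2 * s) + J * 1) J :=
      (hasDerivAt_id' J).mul ((hasDerivAt_id' J).add_const (2 * s))
    convert hprod.sqrt (mul_pos hJ (by linarith)).ne' using 1
    field_simp
    ring
  unfold outageDenom
  refine (((hasDerivAt_id' J).add_const s).add hroot).congr_deriv ?_
  field_simp
  ring

theorem one_sub_div_outageDenom_eq (hs : 0 ≤ s) (hJ : 0 < J) {x : ℝ}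
    (hx : x = (outageDenom s J + s) / 2) : 1 - x / outageDenom s J = J / 2 / (x - s) := by
  have hD : s < outageDenom s J := lt_outageDenom hJ
  have hD0 := outageDenom_pos hs hJ
  have hDs : outageDenom s J - s ≠ 0 := by linarith
  rw [hx, show (outageDenom s J + s) / 2 - s = (outageDenom s J - s) / 2 by ring]
  field_simp
  linear_combination outageDenom_sub_sq hs hJ.le

end outageDenom

section outage

variable {s x J : ℝ}

theorem isTangentExtension_outage_power (hs : 0 ≤ s) (hJ : 0 < J) :
    IsTangentExtension (fun x => outage s x J) (fun x => J / 2 / (x - s))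
      (fun x => -(J / 2) / (x - s) ^ 2) (Ioi s) ((outageDenom s J + s) / 2) where
  mem := by
    have : s < outageDenom s J := lt_outageDenom hJ
    simp only [mem_Ioi]
    linarith
  eq_tangent x _ hxa := by
    have hD : s < outageDenom s J := lt_outageDenom hJ
    have hD0 := outageDenom_pos hs hJ
    have hDs : outageDenom s J - s ≠ 0 := by linarith
    simp only [outage, if_pos hxa]
    rw [show (outageDenom s J + s) / 2 - s = (outageDenom s J - s) / 2 by ring]
    field_simp
    linear_combination (outageDenom s J - x) * outageDenom_sub_sq hs hJ.le
  eq_right x _ hax := by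
    rcases hax.eq_or_lt with rfl | hax
    · simp only [outage, if_pos le_rfl]
      exact one_sub_div_outageDenom_eq hs hJ rfl
    · simp only [outage, if_neg hax.not_ge]
  hasDerivAt_right x hx _ := by
    have hxs : x - s ≠ 0 := sub_ne_zero.2 (ne_of_gt hx)
    refine ((hasDerivAt_const x (J / 2)).div ((hasDerivAt_id' x).sub_const s) hxs).congr_deriv ?_
    ring

theorem strictAntiOn_outage_power (hs : 0 ≤ s) (hJ : 0 < J) :
    StrictAntiOn (fun x => outage s x J) (Ioi s) :=
  (isTangentExtension_outage_power hs hJ).strictAntiOn isOpen_Ioi (convex_Ioi s)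
    fun x hx _ => div_neg_of_neg_of_pos (by linarith) (pow_pos (sub_pos.2 hx) 2)

theorem convexOn_outage_power (hs : 0 ≤ s) (hJ : 0 < J) :
    ConvexOn ℝ (Ioi s) (fun x => outage s x J) := by
  refine (isTangentExtension_outage_power hs hJ).convexOn isOpen_Ioi (convex_Ioi s) ?_
  intro x hx y hy hxy
  have hxs : 0 < x - s := sub_pos.2 hx.1
  simp only [neg_div, neg_le_neg_iff]
  gcongr

noncomputable def criticalJamming (s x : ℝ) : ℝ := 2 * (x - s) ^ 2 / (2 * x - s)

theorem criticalJamming_pos (hs : 0 ≤ s) (hx : s < x) : 0 < criticalJamming s x := by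
  unfold criticalJamming
  have : 0 < x - s := sub_pos.2 hx
  have : 0 < 2 * x - s := by linarith
  positivity

theorem sqrt_criticalJamming (hs : 0 ≤ s) (hx : s < x) :
    √(criticalJamming s x * (criticalJamming s x + 2 * s)) = 2 * x * (x - s) / (2 * x - s) := by
  have hxs : 0 < x - s := sub_pos.2 hx
  have h2xs : 0 < 2 * x - s := by linarith
  have hx0 : 0 < x := hs.trans_lt hx
  rw [Real.sqrt_eq_iff_mul_self_eq_of_pos (div_pos (mul_pos (mul_pos two_pos hx0) hxs) h2xs),
    criticalJamming]
  field_simp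
  ring

theorem outageDenom_criticalJamming (hs : 0 ≤ s) (hx : s < x) :
    outageDenom s (criticalJamming s x) = 2 * x - s := by
  have h2xs : 0 < 2 * x - s := by linarith
  rw [outageDenom, sqrt_criticalJamming hs hx, criticalJamming]
  field_simp
  ring

theorem le_half_outageDenom_add_iff (hs : 0 ≤ s) (hx : s < x) (hJ : 0 ≤ J) :
    x ≤ (outageDenom s J + s) / 2 ↔ criticalJamming s x ≤ J := by
  rw [← (strictMonoOn_outageDenom hs).le_iff_le (criticalJamming_pos hs hx).le hJ,
    outageDenom_criticalJamming hs hx]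
  constructor <;> intro h <;> linarith

theorem outage_eq_of_le_criticalJamming (hs : 0 ≤ s) (hx : s < x) (hJ : 0 < J)
    (hJx : J ≤ criticalJamming s x) : outage s x J = J / 2 / (x - s) := by
  rcases hJx.eq_or_lt with rfl | hlt
  · have hxD : x = (outageDenom s (criticalJamming s x) + s) / 2 := by
      rw [outageDenom_criticalJamming hs hx]
      ring
    rw [outage, if_pos hxD.le]
    exact one_sub_div_outageDenom_eq hs hJ hxD
  · rw [outage, if_neg ((le_half_outageDenom_add_iff hs hx hJ.le).not.2 hlt.not_ge)]

theorem isTangentExtension_outage_jamming (hs : 0 ≤ s) (hx : s < x) :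
    IsTangentExtension (fun J => outage s x J) (fun J => 1 - x / outageDenom s J)
      (fun J => x / (√(J * (J + 2 * s)) * outageDenom s J)) (Ioi 0) (criticalJamming s x) where
  mem := criticalJamming_pos hs hx
  eq_tangent J hJ hJx := by
    have hxs : 0 < x - s := sub_pos.2 hx
    have h2xs : 0 < 2 * x - s := by linarith
    have hx0 : 0 < x := hs.trans_lt hx
    rw [outage_eq_of_le_criticalJamming hs hx hJ hJx, outageDenom_criticalJamming hs hx,
      sqrt_criticalJamming hs hx, criticalJamming]
    field_simp
    ring
  eq_right J hJ hJx := by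
    simp only [outage, if_pos ((le_half_outageDenom_add_iff hs hx (le_of_lt hJ)).2 hJx)]
  hasDerivAt_right J hJ _ := by
    have hD := outageDenom_pos hs hJ
    have hr := sqrt_mul_add_pos hs hJ
    have hquot := ((hasDerivAt_const J x).div (hasDerivAt_outageDenom hs hJ) hD.ne').const_sub 1
    refine hquot.congr_deriv ?_
    field_simp
    ring

theorem strictMonoOn_outage_jamming (hs : 0 ≤ s) (hx : s < x) :
    StrictMonoOn (fun J => outage s x J) (Ioi 0) := by
  refine (isTangentExtension_outage_jamming hs hx).strictMonoOn isOpen_Ioi (convex_Ioi 0) ?_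
  intro J hJ _
  exact div_pos (hs.trans_lt hx) (mul_pos (sqrt_mul_add_pos hs hJ) (outageDenom_pos hs hJ))

theorem concaveOn_outage_jamming (hs : 0 ≤ s) (hx : s < x) :
    ConcaveOn ℝ (Ioi 0) (fun J => outage s x J) := by
  refine (isTangentExtension_outage_jamming hs hx).concaveOn isOpen_Ioi (convex_Ioi 0) ?_
  intro J₁ hJ₁ J₂ hJ₂ hJ
  have hJ₁ : 0 < J₁ := hJ₁.1
  have hJ₂ : (0 : ℝ) ≤ J₂ := le_of_lt hJ₂.1
  have hD := outageDenom_pos hs hJ₁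
  refine div_le_div_of_nonneg_left (hs.trans hx.le) (mul_pos (sqrt_mul_add_pos hs hJ₁) hD) ?_
  exact mul_le_mul (monotoneOn_sqrt_mul_add hs hJ₁.le hJ₂ hJ)
    ((strictMonoOn_outageDenom hs).monotoneOn hJ₁.le hJ₂ hJ) hD.le (Real.sqrt_nonneg _)

theorem continuousOn_outage (hs : 0 ≤ s) :
    ContinuousOn (fun p : ℝ × ℝ => outage s p.1 p.2) (Ioi s ×ˢ Ioi 0) := by
  have hD : Continuous fun p : ℝ × ℝ => outageDenom s p.2 :=
    (continuous_outageDenom s).comp continuous_snd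
  refine ContinuousOn.if ?_ ?_ ?_
  · rintro p ⟨hp, hfr⟩
    exact one_sub_div_outageDenom_eq hs hp.2
      (frontier_le_subset_eq continuous_fst ((hD.add continuous_const).div_const 2) hfr)
  · refine ContinuousOn.mono ?_ inter_subset_left
    exact continuousOn_const.sub (continuous_fst.continuousOn.div hD.continuousOn
      fun p hp => (outageDenom_pos hs hp.2).ne')
  · refine ContinuousOn.mono ?_ inter_subset_left
    exact (continuous_snd.continuousOn.div_const 2).div
      (continuous_fst.continuousOn.sub continuousOn_const) fun p hp => sub_ne_zero.2 (ne_of_gt hp.1)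

end outage

theorem stmt_7 (h s c : ℝ) (hh : 0 < h) (hs : 0 < s) (hc : 1 < c)
    (Pout : ℝ → ℝ → ℝ)
    (hPout : ∀ P J, Pout P J =
      if h * P / (c - 1) ≤ J / 2 * (1 + Real.sqrt (1 + 2 * s / J)) + s then
        1 - (h * P / (c - 1)) / (J * (1 + Real.sqrt (1 + 2 * s / J)) + s)
      else (J / 2) / (h * P / (c - 1) - s)) :
    ContinuousOn (fun p : ℝ × ℝ => Pout p.1 p.2)
        (Set.Ioi ((c - 1) * s / h) ×ˢ Set.Ioi 0) ∧
      (∀ J > (0 : ℝ),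
        StrictAntiOn (fun P => Pout P J) (Set.Ioi ((c - 1) * s / h)) ∧
          ConvexOn ℝ (Set.Ioi ((c - 1) * s / h)) (fun P => Pout P J)) ∧
      (∀ P : ℝ, s < h * P / (c - 1) →
        StrictMonoOn (fun J => Pout P J) (Set.Ioi 0) ∧
          ConcaveOn ℝ (Set.Ioi 0) (fun J => Pout P J)) := by
  have hs0 : 0 ≤ s := hs.le
  have hc1 : 0 < c - 1 := sub_pos.2 hc
  let g := LinearMap.mulLeft ℝ (h / (c - 1))
  have hg : ∀ P, g P = h * P / (c - 1) := fun P => div_mul_eq_mul_div h (c - 1) P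
  have hPout' : ∀ P J, 0 < J → Pout P J = outage s (g P) J := fun P J hJ => by
    rw [hPout, hg, outage, half_mul_one_add_sqrt_add_eq hJ, mul_one_add_sqrt_add_eq_outageDenom hJ]
  have hpre : g ⁻¹' Ioi s = Ioi ((c - 1) * s / h) := by
    ext P
    rw [mem_preimage, hg, mem_Ioi, mem_Ioi, lt_div_iff₀ hc1, div_lt_iff₀ hh, mul_comm P, mul_comm s]
  refine ⟨?_, fun J hJ => ?_, fun P hP => ?_⟩
  · refine ((continuousOn_outage hs0).comp (f := Prod.map g id) (by fun_prop)
      ((hpre ▸ mapsTo_preimage g _).prodMap (mapsTo_id _))).congr ?_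
    rintro p ⟨_, hp₂⟩
    exact hPout' p.1 p.2 hp₂
  · have hfun : (fun P => Pout P J) = (fun x => outage s x J) ∘ g := funext fun P => hPout' P J hJ
    rw [hfun, ← hpre]
    exact ⟨(strictAntiOn_outage_power hs0 hJ).comp_strictMonoOn
      ((strictMono_mul_left_of_pos (div_pos hh hc1)).strictMonoOn _) (mapsTo_preimage _ _),
      (convexOn_outage_power hs0 hJ).comp_linearMap g⟩
  · rw [← hg] at hP
    exact ⟨(strictMonoOn_outage_jamming hs0 hP).congr fun J hJ => (hPout' P J hJ).symm,
      (concaveOn_outage_jamming hs0 hP).congr fun J hJ => (hPout' P J hJ).symm⟩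
end

section
/- For fixed J > 0, the Case-1 partial derivative ∂P_out/∂P = −(h/(c−1))/(J(1+√(1+2σ²/J))+σ²) and the Case-2 partial derivative ∂P_out/∂P = −((c−1)/h)·J/(2(P−(c−1)σ²/h)²) coincide at the boundary point where hP/(c−1) = (J/2)(1+√(1+2σ²/J))+σ², so P_out is continuously differentiable in P across the case boundary. -/
/-!
Write `m = (J/2)(1 + √(1 + 2σ²/J))` for the boundary value of `hP/(c-1)`. It is the positive
root of `2m² = J(2m + σ²)`, and on the boundary `P - (c-1)σ²/h = ((c-1)/h) m`. Substituting,
both derivatives reduce to `-(h/(c-1)) / (2m + σ²)`.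
-/

lemma two_mul_sq_eq_of_eq_half_mul_one_add_sqrt {J s m : ℝ} (hJ : J ≠ 0)
    (hs : 0 ≤ 1 + 2 * s / J) (hm : m = J / 2 * (1 + Real.sqrt (1 + 2 * s / J))) :
    2 * m ^ 2 = J * (2 * m + s) := by
  have hsq : J * Real.sqrt (1 + 2 * s / J) ^ 2 = J + 2 * s := by
    rw [Real.sq_sqrt hs]; field_simp
  subst hm
  linear_combination J / 2 * hsq

lemma sub_mul_div_eq_of_mul_div_eq_add {h c P m s : ℝ} (hh : h ≠ 0) (hc : c - 1 ≠ 0)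
    (hP : h * P / (c - 1) = m + s) :
    P - (c - 1) * s / h = (c - 1) / h * m := by
  field_simp at hP ⊢
  linear_combination hP

theorem stmt_8 (h s c P J : ℝ) (hh : 0 < h) (hs : 0 < s) (hc : 1 < c) (hJ : 0 < J)
    (hbdry : h * P / (c - 1) = J / 2 * (1 + Real.sqrt (1 + 2 * s / J)) + s) :
    -(h / (c - 1)) / (J * (1 + Real.sqrt (1 + 2 * s / J)) + s) =
      -((c - 1) / h) * J / (2 * (P - (c - 1) * s / h) ^ 2) := by
  set m := J / 2 * (1 + Real.sqrt (1 + 2 * s / J)) with hm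
  clear_value m
  have hm_pos : 0 < m := by rw [hm]; positivity
  have hc1 : c - 1 ≠ 0 := by linarith
  have hquad : 2 * m ^ 2 = J * (2 * m + s) :=
    two_mul_sq_eq_of_eq_half_mul_one_add_sqrt hJ.ne' (by positivity) hm
  have hlin : J * (1 + Real.sqrt (1 + 2 * s / J)) = 2 * m := by rw [hm]; ring
  have hinv : 1 / (2 * m + s) = J / (2 * m ^ 2) := by
    rw [hquad]; field_simp
  rw [hlin, sub_mul_div_eq_of_mul_div_eq_add hh.ne' hc1 hbdry]
  calc -(h / (c - 1)) / (2 * m + s) = -(h / (c - 1)) * (J / (2 * m ^ 2)) := by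
        rw [← hinv]; ring
    _ = -((c - 1) / h) * J / (2 * ((c - 1) / h * m) ^ 2) := by
        field_simp
end

section
/- Solving jointly the KKT stationarity conditions −(h/(c−1))/(J(1+√(1+2σ²/J))+σ²) + λ = 0 and −(h/(c−1))·P/((J(1+√(1+2σ²/J))+σ²)·J√(1+2σ²/J)) + μ = 0 with λ, μ > 0 yields P = (μ/λ)·J·√(1+2σ²/J) and J = √((λ/μ)²P² + σ⁴) − σ², for P, J > 0. -/
/-!
Write `s` for `σ²` and `r = √(1 + 2s/J)`. Both stationarity conditions contain the same factor
`g = (h / (c - 1)) / (J (1 + r) + s)`: the first says `g = λ`, the second `g · P / (J r) = μ`, so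
`P / (J r) = μ / λ`. For the second formula, `(J r)² = J² + 2sJ = (J + s)² - s²`.
-/

open Real

lemma eq_div_of_add_eq_zero_of_mul_add_eq_zero {g x lam mu : ℝ} (hlam : lam ≠ 0)
    (h₁ : g + lam = 0) (h₂ : g * x + mu = 0) : x = mu / lam := by
  rw [eq_div_iff hlam]
  linear_combination x * h₁ - h₂

lemma sqrt_sq_mul_sqrt_one_add_add_sq {J s : ℝ} (hJ : 0 < J) (hs : 0 ≤ s) :
    √((J * √(1 + 2 * s / J)) ^ 2 + s ^ 2) = J + s := by
  have hsq : √(1 + 2 * s / J) ^ 2 = 1 + 2 * s / J := sq_sqrt (by positivity)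
  have hexpand : (J * √(1 + 2 * s / J)) ^ 2 + s ^ 2 = (J + s) ^ 2 := by
    rw [mul_pow, hsq]
    field_simp
    ring
  rw [hexpand, sqrt_sq (by positivity)]

theorem stmt_10_general (h s c lam mu P J : ℝ) (hs : 0 < s)
    (hlam : 0 < lam) (hmu : 0 < mu) (hJ : 0 < J)
    (hKKT1 : -(h / (c - 1)) / (J * (1 + Real.sqrt (1 + 2 * s / J)) + s) + lam = 0)
    (hKKT2 : -(h / (c - 1)) / (J * (1 + Real.sqrt (1 + 2 * s / J)) + s) *
        (P / (J * Real.sqrt (1 + 2 * s / J))) + mu = 0) :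
    P = (mu / lam) * J * Real.sqrt (1 + 2 * s / J) ∧
      J = Real.sqrt ((lam / mu) ^ 2 * P ^ 2 + s ^ 2) - s := by
  set r := √(1 + 2 * s / J)
  have hr : 0 < r := sqrt_pos.mpr (by positivity)
  have hratio : P / (J * r) = mu / lam :=
    eq_div_of_add_eq_zero_of_mul_add_eq_zero hlam.ne' hKKT1 hKKT2
  have hP : P = (mu / lam) * J * r := by
    rw [div_eq_iff (by positivity)] at hratio
    rw [hratio, mul_assoc]
  have hJr : (lam / mu) ^ 2 * P ^ 2 = (J * r) ^ 2 := by
    rw [hP]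
    field_simp
  refine ⟨hP, ?_⟩
  rw [hJr, sqrt_sq_mul_sqrt_one_add_add_sq hJ hs.le]
  ring

theorem stmt_10 (h s c lam mu P J : ℝ) (hh : 0 < h) (hs : 0 < s) (hc : 1 < c)
    (hlam : 0 < lam) (hmu : 0 < mu) (hP : 0 < P) (hJ : 0 < J)
    (hKKT1 : -(h / (c - 1)) / (J * (1 + Real.sqrt (1 + 2 * s / J)) + s) + lam = 0)
    (hKKT2 : -(h / (c - 1)) / (J * (1 + Real.sqrt (1 + 2 * s / J)) + s) *
        (P / (J * Real.sqrt (1 + 2 * s / J))) + mu = 0) :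
    P = (mu / lam) * J * Real.sqrt (1 + 2 * s / J) ∧
      J = Real.sqrt ((lam / mu) ^ 2 * P ^ 2 + s ^ 2) - s :=
  stmt_10_general h s c lam mu P J hs hlam hmu hJ hKKT1 hKKT2
end

section
/- The first-level power allocations P_M(h) and J_M(h) defined piecewise—zero for h ≤ h_{0/1} = λ(c−1)σ², equal to (h/(c−1))·μ/(2λ²) − μ(c−1)σ²/(2h) and √((λ/μ)²P_M(h)² + σ⁴) − σ² respectively for h_{0/1} < h ≤ h_{1/2} = λ(c−1)(1/μ + σ²), and equal to ((c−1)/h)(1/(2μ)+σ²) and ((c−1)/h)·λ/(2μ²) respectively for h > h_{1/2}—are continuous functions of h on (0,∞), increasing on (h_{0/1}, h_{1/2}] and decreasing on (h_{1/2}, ∞). -/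
/-!
On `(0, ∞)` each allocation has the shape `min (max u 0) v`, with `u` increasing, vanishing at
`h_{0/1}`, and `v` decreasing, meeting `u` at `h_{1/2}`: below `h_{0/1}` the clamp at `0` wins,
between the thresholds `u` does, and beyond `h_{1/2}` `v` does. Continuity then comes from that of
`min` and `max`. For `J_M`, the middle branch is taken as a function of `max P 0`, where `P` is the
middle branch of `P_M`, which makes it increasing on all of `(0, ∞)`; at `h_{1/2}` it meets the
upper branch because `(λ/μ)² P(h_{1/2})² + s² = (J(h_{1/2}) + s)²`.
-/

open Set

section ThreePiece

variable {α β : Type*} [LinearOrder α] [Zero β]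

def threePiece (a b : α) (u v : α → β) (x : α) : β :=
  if x ≤ a then 0 else if x ≤ b then u x else v x

variable {a b : α} {u v : α → β} {S : Set α}

theorem threePiece_eqOn_Ioc : EqOn (threePiece a b u v) u (Ioc a b) := fun x hx => by
  simp [threePiece, not_le.mpr hx.1, hx.2]

theorem threePiece_congr {u' : α → β} (h : EqOn u u' (Ioc a b)) :
    threePiece a b u v = threePiece a b u' v := by
  funext x
  unfold threePiece
  split_ifs with hxa hxb
  · rfl
  · exact h ⟨not_le.mp hxa, hxb⟩
  · rfl

theorem threePiece_eqOn_Ioi (hab : a ≤ b) : EqOn (threePiece a b u v) v (Ioi b) := fun x hx => by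
  simp [threePiece, not_le.mpr (hab.trans_lt hx), not_le.mpr (mem_Ioi.mp hx)]

variable [LinearOrder β]

theorem threePiece_eq_min_max (hu : MonotoneOn u S) (hv : AntitoneOn v S) (ha : a ∈ S)
    (hb : b ∈ S) (hab : a ≤ b) (hua : u a = 0) (hub : u b = v b) {x : α} (hx : x ∈ S) :
    threePiece a b u v x = min (max (u x) 0) (v x) := by
  unfold threePiece
  split_ifs with hxa hxb
  · have hux : u x ≤ 0 := hua ▸ hu hx ha hxa
    have hvx : 0 ≤ v x := calc
      0 = u a := hua.symm
      _ ≤ u b := hu ha hb hab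
      _ = v b := hub
      _ ≤ v x := hv hx hb (hxa.trans hab)
    rw [max_eq_right hux, min_eq_left hvx]
  · have hux : 0 ≤ u x := hua ▸ hu ha hx (le_of_not_ge hxa)
    have hxv : u x ≤ v x := calc
      u x ≤ u b := hu hx hb hxb
      _ = v b := hub
      _ ≤ v x := hv hx hb hxb
    rw [max_eq_left hux, min_eq_left hxv]
  · have hvu : v x ≤ max (u x) 0 := calc
      v x ≤ v b := hv hb hx (le_of_not_ge hxb)
      _ = u b := hub.symm
      _ ≤ u x := hu hb hx (le_of_not_ge hxb)
      _ ≤ max (u x) 0 := le_max_left _ _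
    rw [min_eq_right hvu]

theorem continuousOn_threePiece [TopologicalSpace α] [TopologicalSpace β] [OrderClosedTopology β]
    (hu : MonotoneOn u S) (hv : AntitoneOn v S) (ha : a ∈ S) (hb : b ∈ S)
    (hab : a ≤ b) (hua : u a = 0) (hub : u b = v b) (huc : ContinuousOn u S)
    (hvc : ContinuousOn v S) : ContinuousOn (threePiece a b u v) S :=
  ((huc.sup continuousOn_const).inf hvc).congr fun _ hx =>
    threePiece_eq_min_max hu hv ha hb hab hua hub hx

theorem monotoneOn_threePiece (hu : MonotoneOn u (Ioc a b)) :
    MonotoneOn (threePiece a b u v) (Ioc a b) :=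
  hu.congr threePiece_eqOn_Ioc.symm

theorem antitoneOn_threePiece (hab : a ≤ b) (hv : AntitoneOn v (Ioi b)) :
    AntitoneOn (threePiece a b u v) (Ioi b) :=
  hv.congr (threePiece_eqOn_Ioi hab).symm

end ThreePiece

noncomputable section Allocation

variable (lam mu s c : ℝ)

def threshold01 : ℝ := lam * (c - 1) * s

def threshold12 : ℝ := lam * (c - 1) * (1 / mu + s)

def powerMid (h : ℝ) : ℝ :=
  (h / (c - 1)) * (mu / (2 * lam ^ 2)) - mu * (c - 1) * s ^ 2 / (2 * h)

def powerHigh (h : ℝ) : ℝ := ((c - 1) / h) * (1 / (2 * mu) + s)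

def jamMid (h : ℝ) : ℝ :=
  Real.sqrt ((lam / mu) ^ 2 * max (powerMid lam mu s c h) 0 ^ 2 + s ^ 2) - s

def jamHigh (h : ℝ) : ℝ := ((c - 1) / h) * (lam / (2 * mu ^ 2))

variable {lam mu s c}

theorem threshold01_pos (hlam : 0 < lam) (hs : 0 < s) (hc : 1 < c) : 0 < threshold01 lam s c := by
  have : 0 < c - 1 := sub_pos.mpr hc
  unfold threshold01; positivity

theorem threshold01_le_threshold12 (hlam : 0 ≤ lam) (hmu : 0 ≤ mu) (hc : 1 ≤ c) :
    threshold01 lam s c ≤ threshold12 lam mu s c := by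
  have : 0 ≤ c - 1 := sub_nonneg.mpr hc
  unfold threshold01 threshold12
  gcongr
  exact le_add_of_nonneg_left (by positivity)

theorem monotoneOn_powerMid (hmu : 0 ≤ mu) (hc : 1 ≤ c) :
    MonotoneOn (powerMid lam mu s c) (Ioi 0) := by
  have : 0 ≤ c - 1 := sub_nonneg.mpr hc
  intro x hx y hy hxy
  rw [mem_Ioi] at hx hy
  unfold powerMid
  gcongr

theorem monotoneOn_jamMid (hmu : 0 ≤ mu) (hc : 1 ≤ c) :
    MonotoneOn (jamMid lam mu s c) (Ioi 0) := by
  intro x hx y hy hxy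
  have := max_le_max_right 0 (monotoneOn_powerMid (s := s) (lam := lam) hmu hc hx hy hxy)
  unfold jamMid
  gcongr

theorem antitoneOn_powerHigh (hmu : 0 ≤ mu) (hs : 0 ≤ s) (hc : 1 ≤ c) :
    AntitoneOn (powerHigh mu s c) (Ioi 0) := by
  have : 0 ≤ c - 1 := sub_nonneg.mpr hc
  intro x hx y hy hxy
  rw [mem_Ioi] at hx hy
  unfold powerHigh
  gcongr

theorem antitoneOn_jamHigh (hlam : 0 ≤ lam) (hc : 1 ≤ c) :
    AntitoneOn (jamHigh lam mu c) (Ioi 0) := by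
  have : 0 ≤ c - 1 := sub_nonneg.mpr hc
  intro x hx y hy hxy
  rw [mem_Ioi] at hx hy
  unfold jamHigh
  gcongr

theorem continuousOn_powerMid : ContinuousOn (powerMid lam mu s c) (Ioi 0) := by
  unfold powerMid
  fun_prop (disch := exact fun x hx => (mul_pos two_pos hx).ne')

theorem continuousOn_jamMid : ContinuousOn (jamMid lam mu s c) (Ioi 0) := by
  have := continuousOn_powerMid (lam := lam) (mu := mu) (s := s) (c := c)
  unfold jamMid
  fun_prop

theorem continuousOn_powerHigh : ContinuousOn (powerHigh mu s c) (Ioi 0) := by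
  unfold powerHigh
  fun_prop (disch := exact fun x hx => ne_of_gt hx)

theorem continuousOn_jamHigh : ContinuousOn (jamHigh lam mu c) (Ioi 0) := by
  unfold jamHigh
  fun_prop (disch := exact fun x hx => ne_of_gt hx)

theorem powerMid_threshold01 (hlam : lam ≠ 0) (hc : c ≠ 1) :
    powerMid lam mu s c (threshold01 lam s c) = 0 := by
  have : c - 1 ≠ 0 := sub_ne_zero.mpr hc
  unfold powerMid threshold01
  field_simp
  ring

theorem powerMid_threshold12 (hlam : lam ≠ 0) (hmu : mu ≠ 0) (hc : c ≠ 1) :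
    powerMid lam mu s c (threshold12 lam mu s c) = powerHigh mu s c (threshold12 lam mu s c) := by
  have : c - 1 ≠ 0 := sub_ne_zero.mpr hc
  unfold powerMid powerHigh threshold12
  field_simp
  ring

theorem jamMid_threshold01 (hlam : lam ≠ 0) (hs : 0 ≤ s) (hc : c ≠ 1) :
    jamMid lam mu s c (threshold01 lam s c) = 0 := by
  rw [jamMid, powerMid_threshold01 hlam hc, max_self, zero_pow two_ne_zero, mul_zero, zero_add,
    Real.sqrt_sq hs, sub_self]

theorem jamMid_eq_of_threshold01_le (hlam : 0 < lam) (hmu : 0 ≤ mu) (hs : 0 < s) (hc : 1 < c)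
    {h : ℝ} (hh : threshold01 lam s c ≤ h) :
    jamMid lam mu s c h = Real.sqrt ((lam / mu) ^ 2 * powerMid lam mu s c h ^ 2 + s ^ 2) - s := by
  have ha := threshold01_pos hlam hs hc
  have hP : 0 ≤ powerMid lam mu s c h := by
    rw [← powerMid_threshold01 (mu := mu) hlam.ne' hc.ne']
    exact monotoneOn_powerMid hmu hc.le ha (ha.trans_le hh) hh
  rw [jamMid, max_eq_left hP]

theorem jamMid_threshold12 (hlam : 0 < lam) (hmu : 0 < mu) (hs : 0 ≤ s) (hc : 1 < c) :
    jamMid lam mu s c (threshold12 lam mu s c) = jamHigh lam mu c (threshold12 lam mu s c) := by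
  have : 0 < c - 1 := sub_pos.mpr hc
  have hb : 0 < threshold12 lam mu s c := by unfold threshold12; positivity
  have hP : 0 ≤ powerHigh mu s c (threshold12 lam mu s c) := by unfold powerHigh; positivity
  have hJ : 0 ≤ jamHigh lam mu c (threshold12 lam mu s c) + s := by unfold jamHigh; positivity
  have key : (lam / mu) ^ 2 * powerHigh mu s c (threshold12 lam mu s c) ^ 2 + s ^ 2 =
      (jamHigh lam mu c (threshold12 lam mu s c) + s) ^ 2 := by
    unfold powerHigh jamHigh threshold12
    field_simp
    ring
  rw [jamMid, powerMid_threshold12 hlam.ne' hmu.ne' hc.ne', max_eq_left hP, key, Real.sqrt_sq hJ,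
    add_sub_cancel_right]

end Allocation

theorem stmt_12 (lam mu s c : ℝ) (hlam : 0 < lam) (hmu : 0 < mu) (hs : 0 < s) (hc : 1 < c)
    (PM JM : ℝ → ℝ)
    (hPM : ∀ h : ℝ, PM h =
      if h ≤ lam * (c - 1) * s then 0
      else if h ≤ lam * (c - 1) * (1 / mu + s) then
        (h / (c - 1)) * (mu / (2 * lam ^ 2)) - mu * (c - 1) * s ^ 2 / (2 * h)
      else ((c - 1) / h) * (1 / (2 * mu) + s))
    (hJM : ∀ h : ℝ, JM h =
      if h ≤ lam * (c - 1) * s then 0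
      else if h ≤ lam * (c - 1) * (1 / mu + s) then
        Real.sqrt ((lam / mu) ^ 2 * (PM h) ^ 2 + s ^ 2) - s
      else ((c - 1) / h) * (lam / (2 * mu ^ 2))) :
    ContinuousOn PM (Set.Ioi 0) ∧ ContinuousOn JM (Set.Ioi 0) ∧
      MonotoneOn PM (Set.Ioc (lam * (c - 1) * s) (lam * (c - 1) * (1 / mu + s))) ∧
      MonotoneOn JM (Set.Ioc (lam * (c - 1) * s) (lam * (c - 1) * (1 / mu + s))) ∧
      AntitoneOn PM (Set.Ioi (lam * (c - 1) * (1 / mu + s))) ∧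
      AntitoneOn JM (Set.Ioi (lam * (c - 1) * (1 / mu + s))) := by
  have ha : threshold01 lam s c ∈ Ioi 0 := threshold01_pos hlam hs hc
  have hab := threshold01_le_threshold12 hlam.le hmu.le hc.le (s := s)
  have hb : threshold12 lam mu s c ∈ Ioi 0 := ha.trans_le hab
  have hP : PM = threePiece (threshold01 lam s c) (threshold12 lam mu s c)
      (powerMid lam mu s c) (powerHigh mu s c) := funext hPM
  have hJ : JM = threePiece (threshold01 lam s c) (threshold12 lam mu s c)
      (jamMid lam mu s c) (jamHigh lam mu c) := by
    refine (funext hJM : JM = threePiece (threshold01 lam s c) (threshold12 lam mu s c) _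
      (jamHigh lam mu c)).trans (threePiece_congr fun h hh => ?_)
    rw [hP, threePiece_eqOn_Ioc hh, jamMid_eq_of_threshold01_le hlam hmu.le hs hc hh.1.le]
  have hPMid := monotoneOn_powerMid (lam := lam) (s := s) hmu.le hc.le
  have hPHigh := antitoneOn_powerHigh hmu.le hs.le hc.le (s := s)
  have hJMid := monotoneOn_jamMid (lam := lam) (s := s) hmu.le hc.le
  have hJHigh := antitoneOn_jamHigh hlam.le hc.le (mu := mu)
  have hIoc : Ioc (threshold01 lam s c) (threshold12 lam mu s c) ⊆ Ioi 0 :=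
    fun _ hx => mem_Ioi.mpr (ha.trans hx.1)
  have hIoi : Ioi (threshold12 lam mu s c) ⊆ Ioi 0 := fun _ hx => mem_Ioi.mpr (hb.trans hx)
  subst hP hJ
  exact ⟨continuousOn_threePiece hPMid hPHigh ha hb hab (powerMid_threshold01 hlam.ne' hc.ne')
      (powerMid_threshold12 hlam.ne' hmu.ne' hc.ne') continuousOn_powerMid continuousOn_powerHigh,
    continuousOn_threePiece hJMid hJHigh ha hb hab (jamMid_threshold01 hlam.ne' hs.le hc.ne')
      (jamMid_threshold12 hlam hmu hs.le hc) continuousOn_jamMid continuousOn_jamHigh,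
    monotoneOn_threePiece (hPMid.mono hIoc), monotoneOn_threePiece (hJMid.mono hIoc),
    antitoneOn_threePiece hab (hPHigh.mono hIoi), antitoneOn_threePiece hab (hJHigh.mono hIoi)⟩
end

section
/- If 0 < h₀ ≤ h₁, σ² > 0, c > 1, J ≥ 0, and c(2J+σ²)/h₁ < σ²/h₀, then in the two-block problem with all jamming power on block 1 (x₀ = σ², x₁ = 2J+σ²), the power-minimizing transmitter strategy achieving sum mutual information log c puts all power on block 0: i.e., the water level λ = √(c·(x₀/h₀)(x₁/h₁)) satisfies λ < x₀/h₀, so the water-filling solution assigns P₁ = 0 and P₀ determined by log(1 + h₀P₀/σ²) = log c. -/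
theorem Real.sqrt_mul_lt_of_lt {a b : ℝ} (ha : 0 < a) (hb : b < a) : √(a * b) < a :=
  (Real.sqrt_lt' ha).2 (by nlinarith)

theorem one_add_mul_div_div_eq {h x : ℝ} (hh : h ≠ 0) (hx : x ≠ 0) (c : ℝ) :
    1 + h * ((c - 1) * x / h) / x = c := by
  field_simp
  ring

theorem stmt_17_general (h0 h1 s c J : ℝ)
    (hh0 : 0 < h0) (hs : 0 < s)
    (x0 x1 lam P0 : ℝ)
    (hx0 : x0 = s) (hx1 : x1 = 2 * J + s)
    (hlam : lam = Real.sqrt (c * (x0 / h0) * (x1 / h1)))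
    (hP0 : P0 = (c - 1) * s / h0)
    (hcond : c * (2 * J + s) / h1 < s / h0) :
    lam < x0 / h0 ∧
      Real.log (1 + h0 * P0 / s) = Real.log c ∧
      Real.log (1 + h0 * P0 / x0) + Real.log (1 + h1 * 0 / x1) = Real.log c := by
  subst x0 x1 lam P0
  have hsnr := one_add_mul_div_div_eq hh0.ne' hs.ne' c
  refine ⟨?_, by rw [hsnr], by simp [hsnr]⟩
  rw [show c * (s / h0) * ((2 * J + s) / h1) = s / h0 * (c * ((2 * J + s) / h1)) by ring]
  exact Real.sqrt_mul_lt_of_lt (div_pos hs hh0) (by rwa [← mul_div_assoc])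

theorem stmt_17 (h0 h1 s c J : ℝ)
    (hh0 : 0 < h0) (hle : h0 ≤ h1) (hs : 0 < s) (hc : 1 < c) (hJ : 0 ≤ J)
    (x0 x1 lam P0 : ℝ)
    (hx0 : x0 = s) (hx1 : x1 = 2 * J + s)
    (hlam : lam = Real.sqrt (c * (x0 / h0) * (x1 / h1)))
    (hP0 : P0 = (c - 1) * s / h0)
    (hcond : c * (2 * J + s) / h1 < s / h0) :
    lam < x0 / h0 ∧
      Real.log (1 + h0 * P0 / s) = Real.log c ∧
      Real.log (1 + h0 * P0 / x0) + Real.log (1 + h1 * 0 / x1) = Real.log c :=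
  stmt_17_general h0 h1 s c J hh0 hs x0 x1 lam P0 hx0 hx1 hlam hP0 hcond
end
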